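/- arXiv:2310.17319 — 5 statements merged into one kernel-verified Lean document; each statement's English description precedes it below -/
import Mathlib

section
/- Let $F: \mathbb{R}^n \to \mathbb{R}$ be differentiable and $(L_0, L_1)$-smooth, i.e., for all $x, x'$ with $\|x - x'\| \le 1/L_1$ it holds that $\|\nabla F(x) - \nabla F(x')\| \le (L_0 + L_1\|\nabla F(x)\|)\|x - x'\|$. Then for all $x, x'$ with $\|x - x'\| \le 1/L_1$, $F(x') \le F(x) + \nabla F(x)^T(x' - x) + \tfrac{1}{2}(L_0 + L_1\|\nabla F(x)\|)\|x' - x\|^2$. -/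
open scoped RealInnerProductSpace
open Set

/-!
On the segment from `x` to `x' = x + v`, the function
`φ t = F (x + t • v) - t ⟪∇F x, v⟫ - (L / 2) t² ‖v‖²` with `L = L0 + L1 ‖∇F x‖` has derivative
`⟪∇F (x + t • v) - ∇F x, v⟫ - L t ‖v‖² ≤ 0`, by Cauchy–Schwarz and the smoothness bound with base
point `x`, which applies because every point of the segment lies within `1 / L1` of `x`.
Hence `φ 1 ≤ φ 0`. Since the constant only involves `∇F x`, this is the usual Lipschitz
descent argument with `L` frozen at the base point.
-/

variable {E : Type*} [NormedAddCommGroup E] [InnerProductSpace ℝ E] [CompleteSpace E]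

theorem HasGradientAt.hasDerivAt_comp_add_smul {f : E → ℝ} {g x v : E} {t : ℝ}
    (hf : HasGradientAt f g (x + t • v)) :
    HasDerivAt (fun s : ℝ => f (x + s • v)) ⟪g, v⟫ t := by
  have hline : HasDerivAt (fun s : ℝ => x + s • v) v t := by
    simpa using ((hasDerivAt_id t).smul_const v).const_add x
  have := hf.hasFDerivAt.comp_hasDerivAt t hline
  simp only [InnerProductSpace.toDual_apply_apply] at this
  exact this

theorem le_add_inner_add_of_norm_grad_sub_le {f : E → ℝ} {g : E → E} {x v : E} {L : ℝ}
    (hf : ∀ t ∈ Icc (0 : ℝ) 1, HasGradientAt f (g (x + t • v)) (x + t • v))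
    (hg : ∀ t ∈ Icc (0 : ℝ) 1, ‖g (x + t • v) - g x‖ ≤ L * t * ‖v‖) :
    f (x + v) ≤ f x + ⟪g x, v⟫ + L / 2 * ‖v‖ ^ 2 := by
  set φ : ℝ → ℝ := fun t => f (x + t • v) - t * ⟪g x, v⟫ - L / 2 * t ^ 2 * ‖v‖ ^ 2
  have hφ : ∀ t ∈ Icc (0 : ℝ) 1,
      HasDerivAt φ (⟪g (x + t • v), v⟫ - ⟪g x, v⟫ - L * t * ‖v‖ ^ 2) t := fun t ht => by
    have hquad := ((hasDerivAt_pow 2 t).const_mul (L / 2)).mul_const (‖v‖ ^ 2)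
    refine (((hf t ht).hasDerivAt_comp_add_smul.sub
      ((hasDerivAt_id t).mul_const ⟪g x, v⟫)).sub hquad).congr_deriv ?_
    push_cast
    ring
  have hφ' : ∀ t ∈ Icc (0 : ℝ) 1, ⟪g (x + t • v), v⟫ - ⟪g x, v⟫ - L * t * ‖v‖ ^ 2 ≤ 0 :=
    fun t ht => sub_nonpos.2 <| calc
      ⟪g (x + t • v), v⟫ - ⟪g x, v⟫ = ⟪g (x + t • v) - g x, v⟫ := (inner_sub_left ..).symm
      _ ≤ ‖g (x + t • v) - g x‖ * ‖v‖ := real_inner_le_norm _ _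
      _ ≤ L * t * ‖v‖ * ‖v‖ := by gcongr; exact hg t ht
      _ = L * t * ‖v‖ ^ 2 := by ring
  have hanti : AntitoneOn φ (Icc 0 1) :=
    antitoneOn_of_hasDerivWithinAt_nonpos (convex_Icc 0 1)
      (fun t ht => (hφ t ht).continuousAt.continuousWithinAt)
      (fun t ht => (hφ t (interior_subset ht)).hasDerivWithinAt)
      (fun t ht => hφ' t (interior_subset ht))
  have hφ0 : φ 0 = f x := by simp [φ]
  have hφ1 : φ 1 = f (x + v) - ⟪g x, v⟫ - L / 2 * ‖v‖ ^ 2 := by simp [φ]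
  linarith [hanti (left_mem_Icc.2 zero_le_one) (right_mem_Icc.2 zero_le_one) zero_le_one]

theorem generalized_smooth_descent_general {n : ℕ}
    (F : EuclideanSpace ℝ (Fin n) → ℝ)
    (grad : EuclideanSpace ℝ (Fin n) → EuclideanSpace ℝ (Fin n))
    (L0 L1 : ℝ)
    (hgrad : ∀ x, HasGradientAt F (grad x) x)
    (hsmooth : ∀ x x', ‖x - x'‖ ≤ 1 / L1 →
      ‖grad x - grad x'‖ ≤ (L0 + L1 * ‖grad x‖) * ‖x - x'‖) :
    ∀ x x', ‖x - x'‖ ≤ 1 / L1 →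
      F x' ≤ F x + ⟪grad x, x' - x⟫ + (1 / 2) * (L0 + L1 * ‖grad x‖) * ‖x' - x‖ ^ 2 := by
  intro x x' hxx'
  have hdist : ∀ t ∈ Icc (0 : ℝ) 1, ‖x - (x + t • (x' - x))‖ = t * ‖x' - x‖ := fun t ht => by
    rw [sub_add_cancel_left, norm_neg, norm_smul, Real.norm_of_nonneg ht.1]
  have hsegment : ∀ t ∈ Icc (0 : ℝ) 1,
      ‖grad (x + t • (x' - x)) - grad x‖ ≤ (L0 + L1 * ‖grad x‖) * t * ‖x' - x‖ := by
    intro t ht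
    have hclose : ‖x - (x + t • (x' - x))‖ ≤ 1 / L1 := by
      rw [hdist t ht, ← norm_sub_rev]
      exact (mul_le_of_le_one_left (norm_nonneg _) ht.2).trans hxx'
    rw [norm_sub_rev, mul_assoc, ← hdist t ht]
    exact hsmooth x _ hclose
  have := le_add_inner_add_of_norm_grad_sub_le (fun t _ => hgrad _) hsegment
  rw [add_sub_cancel] at this
  linarith

/-- Descent inequality for `(L₀, L₁)`-smooth functions. -/
theorem generalized_smooth_descent {n : ℕ}
    (F : EuclideanSpace ℝ (Fin n) → ℝ)
    (grad : EuclideanSpace ℝ (Fin n) → EuclideanSpace ℝ (Fin n))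
    (L0 L1 : ℝ) (hL0 : 0 < L0) (hL1 : 0 ≤ L1)
    (hgrad : ∀ x, HasGradientAt F (grad x) x)
    (hsmooth : ∀ x x', ‖x - x'‖ ≤ 1 / L1 →
      ‖grad x - grad x'‖ ≤ (L0 + L1 * ‖grad x‖) * ‖x - x'‖) :
    ∀ x x', ‖x - x'‖ ≤ 1 / L1 →
      F x' ≤ F x + ⟪grad x, x' - x⟫ + (1 / 2) * (L0 + L1 * ‖grad x‖) * ‖x' - x‖ ^ 2 :=
  generalized_smooth_descent_general F grad L0 L1 hgrad hsmooth
end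

section
/- Let $\psi^*: \mathbb{R} \to \mathbb{R}$ be differentiable with monotone increasing derivative $(\psi^*)'$, let $\ell: \mathbb{R}^n \times \Xi \to \mathbb{R}$ be such that $\|\nabla_x \ell(x;\xi)\| \le G$ for all $x, \xi$, and define $\mathcal{L}(x, \eta) = \lambda\,\mathbb{E}_\xi[\psi^*((\ell(x;\xi) - \eta)/\lambda)] + \eta$ with $\lambda > 0$. Then for any fixed $x$ and any $\eta, \eta^* \in \mathbb{R}$, $\|\nabla_x \mathcal{L}(x, \eta) - \nabla_x \mathcal{L}(x, \eta^*)\| \le G\,|\nabla_\eta \mathcal{L}(x, \eta) - \nabla_\eta \mathcal{L}(x, \eta^*)|$. -/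
open MeasureTheory

/-- DRO dual gradient comparison: the change in the `x`-gradient of
`𝓛(x,η) = λ E[ψ*((ℓ(x;ξ)-η)/λ)] + η` when `η` varies is controlled by `G` times the
change in the `η`-gradient, thanks to the monotonicity of `(ψ*)'`. -/
theorem dro_dual_gradient_comparison {Ξ : Type*} [MeasurableSpace Ξ]
    (μ : Measure Ξ) [IsProbabilityMeasure μ] {n : ℕ}
    (ψs ψd : ℝ → ℝ) (hψderiv : ∀ t, HasDerivAt ψs (ψd t) t) (hψmono : Monotone ψd)
    (ℓ : EuclideanSpace ℝ (Fin n) → Ξ → ℝ)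
    (gℓ : EuclideanSpace ℝ (Fin n) → Ξ → EuclideanSpace ℝ (Fin n))
    (G lam : ℝ) (hG : ∀ x ξ, ‖gℓ x ξ‖ ≤ G) (hlam : 0 < lam)
    (hint_scal : ∀ (x : EuclideanSpace ℝ (Fin n)) (η : ℝ),
      Integrable (fun ξ => ψd ((ℓ x ξ - η) / lam)) μ)
    (hint_vec : ∀ (x : EuclideanSpace ℝ (Fin n)) (η : ℝ),
      Integrable (fun ξ => ψd ((ℓ x ξ - η) / lam) • gℓ x ξ) μ) :
    ∀ (x : EuclideanSpace ℝ (Fin n)) (η ηstar : ℝ),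
      ‖(∫ ξ, ψd ((ℓ x ξ - η) / lam) • gℓ x ξ ∂μ) -
          ∫ ξ, ψd ((ℓ x ξ - ηstar) / lam) • gℓ x ξ ∂μ‖ ≤
        G * |(1 - ∫ ξ, ψd ((ℓ x ξ - η) / lam) ∂μ) -
          (1 - ∫ ξ, ψd ((ℓ x ξ - ηstar) / lam) ∂μ)| := by
  intro x η ηstar
  set f : Ξ → ℝ := fun ξ => ψd ((ℓ x ξ - η) / lam) with hf
  set g : Ξ → ℝ := fun ξ => ψd ((ℓ x ξ - ηstar) / lam) with hg
  have hfi : Integrable f μ := hint_scal x η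
  have hgi : Integrable g μ := hint_scal x ηstar
  have hfg : Integrable (fun ξ => f ξ - g ξ) μ := hfi.sub hgi
  have hvfi : Integrable (fun ξ => f ξ • gℓ x ξ) μ := hint_vec x η
  have hvgi : Integrable (fun ξ => g ξ • gℓ x ξ) μ := hint_vec x ηstar
  have hvec : (∫ ξ, f ξ • gℓ x ξ ∂μ) - ∫ ξ, g ξ • gℓ x ξ ∂μ
      = ∫ ξ, (f ξ - g ξ) • gℓ x ξ ∂μ := by
    rw [← integral_sub hvfi hvgi]
    simp [sub_smul]
  have hRHS : (1 - ∫ ξ, f ξ ∂μ) - (1 - ∫ ξ, g ξ ∂μ) = -(∫ ξ, (f ξ - g ξ) ∂μ) := by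
    rw [integral_sub hfi hgi]; ring
  -- constant sign of f - g
  have hkey : ∫ ξ, |f ξ - g ξ| ∂μ = |∫ ξ, (f ξ - g ξ) ∂μ| := by
    rcases le_total η ηstar with h | h
    · have hpt : ∀ ξ, 0 ≤ f ξ - g ξ := by
        intro ξ
        have hdiv : (ℓ x ξ - ηstar) / lam ≤ (ℓ x ξ - η) / lam := by gcongr <;> linarith
        have := hψmono hdiv
        simp only [hf, hg, sub_nonneg]
        exact this
      rw [abs_of_nonneg (integral_nonneg (fun ξ => hpt ξ))]
      exact integral_congr_ae (Filter.Eventually.of_forall fun ξ => abs_of_nonneg (hpt ξ))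
    · have hpt : ∀ ξ, f ξ - g ξ ≤ 0 := by
        intro ξ
        have hdiv : (ℓ x ξ - η) / lam ≤ (ℓ x ξ - ηstar) / lam := by gcongr <;> linarith
        have := hψmono hdiv
        simp only [hf, hg, sub_nonpos]
        exact this
      rw [abs_of_nonpos (integral_nonpos (fun ξ => hpt ξ)), ← integral_neg]
      exact integral_congr_ae (Filter.Eventually.of_forall fun ξ => abs_of_nonpos (hpt ξ))
  calc ‖(∫ ξ, f ξ • gℓ x ξ ∂μ) - ∫ ξ, g ξ • gℓ x ξ ∂μ‖
      = ‖∫ ξ, (f ξ - g ξ) • gℓ x ξ ∂μ‖ := by rw [hvec]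
    _ ≤ ∫ ξ, ‖(f ξ - g ξ) • gℓ x ξ‖ ∂μ := norm_integral_le_integral_norm _
    _ ≤ ∫ ξ, |f ξ - g ξ| * G ∂μ := by
        apply integral_mono_of_nonneg
        · filter_upwards with ξ using norm_nonneg _
        · exact hfg.abs.mul_const G
        · filter_upwards with ξ
          rw [norm_smul, Real.norm_eq_abs]
          exact mul_le_mul_of_nonneg_left (hG x ξ) (abs_nonneg _)
    _ = G * ∫ ξ, |f ξ - g ξ| ∂μ := by rw [integral_mul_const]; ring
    _ = G * |∫ ξ, (f ξ - g ξ) ∂μ| := by rw [hkey]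
    _ = G * |(1 - ∫ ξ, f ξ ∂μ) - (1 - ∫ ξ, g ξ ∂μ)| := by rw [hRHS, abs_neg]
end

section
/- Define the smoothed CVaR divergence at level $\alpha \in (0,1)$ by $\psi^{\mathrm{smo}}_\alpha(t) = t\log t + \frac{1 - \alpha t}{\alpha}\log\frac{1 - \alpha t}{1 - \alpha}$ for $t \in [0, 1/\alpha)$ and $+\infty$ otherwise (with the convention $0 \log 0 = 0$). Then its convex conjugate is $\psi^{\mathrm{smo},*}_\alpha(s) = \sup_{t}(st - \psi^{\mathrm{smo}}_\alpha(t)) = \frac{1}{\alpha}\log(1 - \alpha + \alpha e^s)$ for all $s \in \mathbb{R}$. -/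
/-- The smoothed CVaR divergence at level `α ∈ (0,1)`, defined on `[0, 1/α)`
(with the convention `0 log 0 = 0`, which holds since `Real.log 0 = 0`). -/
noncomputable def psiCVaRsmo (α t : ℝ) : ℝ :=
  t * Real.log t + ((1 - α * t) / α) * Real.log ((1 - α * t) / (1 - α))

lemma aux_log (x y : ℝ) (hx : 0 ≤ x) (hy : 0 < y) :
    x - y ≤ x * (Real.log x - Real.log y) := by
  rcases eq_or_lt_of_le hx with h | h
  · rw [← h]; simp; linarith
  · have h0 := Real.log_le_sub_one_of_pos (show 0 < y / x by positivity)
    rw [Real.log_div hy.ne' h.ne'] at h0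
    have h2 : x * (Real.log y - Real.log x) ≤ x * (y / x - 1) :=
      mul_le_mul_of_nonneg_left h0 hx
    have h3 : x * (y / x - 1) = y - x := by field_simp
    have h4 : x * (Real.log x - Real.log y) = -(x * (Real.log y - Real.log x)) := by ring
    linarith

/-- The convex conjugate of the smoothed CVaR divergence is
`ψ*(s) = (1/α) log(1 - α + α eˢ)`; the supremum over the effective domain `[0, 1/α)`
is attained. -/
theorem smoothed_cvar_conjugate (α : ℝ) (hα : α ∈ Set.Ioo (0 : ℝ) 1) (s : ℝ) :
    IsGreatest {y : ℝ | ∃ t ∈ Set.Ico (0 : ℝ) (1 / α), y = s * t - psiCVaRsmo α t}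
      ((1 / α) * Real.log (1 - α + α * Real.exp s)) := by
  obtain ⟨hα0, hα1⟩ := hα
  have hes := Real.exp_pos s
  set D := 1 - α + α * Real.exp s with hDdef
  have hD : 0 < D := by nlinarith
  set t0 := Real.exp s / D with ht0def
  have ht0 : 0 < t0 := by positivity
  have h1t0 : 1 - α * t0 = (1 - α) / D := by
    rw [ht0def]; field_simp; ring
  have h1t0pos : 0 < 1 - α * t0 := by
    rw [h1t0]; have : (0:ℝ) < 1 - α := by linarith
    positivity
  have ht0lt : t0 < 1 / α := by
    rw [lt_div_iff₀ hα0]; nlinarith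
  have hlogt0 : Real.log t0 = s - Real.log D := by
    rw [ht0def, Real.log_div (Real.exp_ne_zero s) hD.ne', Real.log_exp]
  have hlog1t0 : Real.log (1 - α * t0) = Real.log (1 - α) - Real.log D := by
    rw [h1t0, Real.log_div (by linarith) hD.ne']
  constructor
  · refine ⟨t0, ⟨ht0.le, ht0lt⟩, ?_⟩
    unfold psiCVaRsmo
    have hlog2 : Real.log ((1 - α * t0) / (1 - α)) = -Real.log D := by
      rw [Real.log_div h1t0pos.ne' (by linarith : (1:ℝ) - α ≠ 0), hlog1t0]; ring
    rw [hlogt0, hlog2]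
    field_simp
    ring
  · rintro y ⟨t, ⟨htnn, ht1⟩, rfl⟩
    have h1t : 0 < 1 - α * t := by
      have := (lt_div_iff₀ hα0).1 ht1; nlinarith
    have I1 : t - t0 ≤ t * (Real.log t - Real.log t0) := aux_log t t0 htnn ht0
    have I2 : (1 - α * t) - (1 - α * t0) ≤
        (1 - α * t) * (Real.log (1 - α * t) - Real.log (1 - α * t0)) :=
      aux_log _ _ h1t.le h1t0pos
    have I2' : t0 - t ≤ ((1 - α * t) / α) *
        (Real.log (1 - α * t) - Real.log (1 - α * t0)) := by
      have h5 := mul_le_mul_of_nonneg_left I2 (by positivity : (0:ℝ) ≤ 1 / α)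
      have h6 : (1 / α) * ((1 - α * t) - (1 - α * t0)) = t0 - t := by
        field_simp; ring
      have h7 : (1 / α) * ((1 - α * t) *
          (Real.log (1 - α * t) - Real.log (1 - α * t0))) =
          ((1 - α * t) / α) * (Real.log (1 - α * t) - Real.log (1 - α * t0)) := by
        ring
      linarith
    rw [hlogt0] at I1
    rw [hlog1t0] at I2'
    unfold psiCVaRsmo
    rw [Real.log_div h1t.ne' (by linarith : (1:ℝ) - α ≠ 0)]
    have expand1 : t * (Real.log t - (s - Real.log D)) =
        t * Real.log t - t * s + t * Real.log D := by ring
    have expand2 : ((1 - α * t) / α) *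
        (Real.log (1 - α * t) - (Real.log (1 - α) - Real.log D)) =
        ((1 - α * t) / α) * (Real.log (1 - α * t) - Real.log (1 - α)) +
        ((1 - α * t) / α) * Real.log D := by ring
    have key : t * Real.log D + ((1 - α * t) / α) * Real.log D =
        (1 / α) * Real.log D := by
      field_simp; ring
    linarith
end

section
/- Define the smoothed $\chi^2$ divergence by $\psi(t) = (t-1)^2$ for $t \ge 1$, $\psi(t) = 2(t\log t - t + 1)$ for $t \in [0, 1)$ (with $0\log 0 = 0$), and $\psi(t) = +\infty$ for $t < 0$. Then its convex conjugate is $\psi^*(s) = -1 + \frac{1}{4}(s+2)^2$ for $s \ge 0$ and $\psi^*(s) = 2(e^{s/2} - 1)$ for $s < 0$. -/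
/-- The smoothed `χ²` divergence: `(t-1)²` for `t ≥ 1`, `2(t log t - t + 1)` for
`t ∈ [0,1)` (with `0 log 0 = 0`, which holds since `Real.log 0 = 0`), `+∞` for `t < 0`
(encoded by taking the supremum only over `t ≥ 0`). -/
noncomputable def psiChi2smo (t : ℝ) : ℝ :=
  if 1 ≤ t then (t - 1) ^ 2 else 2 * (t * Real.log t - t + 1)

lemma tlogt_lower (t : ℝ) (ht : 0 < t) : t - 1 ≤ t * Real.log t := by
  have h := Real.log_le_sub_one_of_pos (x := 1 / t) (by positivity)
  rw [Real.log_div one_ne_zero (ne_of_gt ht), Real.log_one] at h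
  have := mul_le_mul_of_nonneg_left h ht.le
  have htne : t ≠ 0 := ne_of_gt ht
  field_simp at this
  nlinarith

lemma key_exp (s t : ℝ) (ht : 0 < t) :
    t * (s / 2) - t * Real.log t ≤ Real.exp (s / 2) - t := by
  have h := Real.log_le_sub_one_of_pos (x := Real.exp (s / 2) / t) (by positivity)
  rw [Real.log_div (ne_of_gt (Real.exp_pos _)) (ne_of_gt ht), Real.log_exp] at h
  have := mul_le_mul_of_nonneg_left h ht.le
  have htne : t ≠ 0 := ne_of_gt ht
  field_simp at this ⊢
  nlinarith

/-- The convex conjugate of the smoothed `χ²` divergence is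
`ψ*(s) = -1 + (1/4)(s+2)²` for `s ≥ 0` and `ψ*(s) = 2(e^{s/2} - 1)` for `s < 0`;
the supremum is attained. -/
theorem smoothed_chi2_conjugate (s : ℝ) :
    IsGreatest {y : ℝ | ∃ t : ℝ, 0 ≤ t ∧ y = s * t - psiChi2smo t}
      (if 0 ≤ s then -1 + (1 / 4) * (s + 2) ^ 2 else 2 * (Real.exp (s / 2) - 1)) := by
  constructor
  · by_cases hs : 0 ≤ s
    · rw [if_pos hs]
      refine ⟨1 + s / 2, by linarith, ?_⟩
      rw [psiChi2smo, if_pos (by linarith)]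
      ring
    · rw [if_neg hs]
      push_neg at hs
      have hpos := Real.exp_pos (s / 2)
      refine ⟨Real.exp (s / 2), hpos.le, ?_⟩
      have hlt : Real.exp (s / 2) < 1 := Real.exp_lt_one_iff.mpr (by linarith)
      rw [psiChi2smo, if_neg (not_le.mpr hlt), Real.log_exp]
      ring
  · rintro y ⟨t, ht, rfl⟩
    by_cases hs : 0 ≤ s
    · rw [if_pos hs]
      by_cases ht1 : 1 ≤ t
      · rw [psiChi2smo, if_pos ht1]
        nlinarith [sq_nonneg (t - 1 - s / 2)]
      · rw [psiChi2smo, if_neg ht1]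
        push_neg at ht1
        rcases eq_or_lt_of_le ht with h0 | h0
        · rw [← h0]; simp [Real.log_zero]; nlinarith
        · have := tlogt_lower t h0
          nlinarith
    · rw [if_neg hs]
      push_neg at hs
      by_cases ht1 : 1 ≤ t
      · rw [psiChi2smo, if_pos ht1]
        have := Real.add_one_le_exp (s / 2)
        nlinarith [mul_nonneg (sub_nonneg.mpr ht1) (neg_nonneg.mpr hs.le)]
      · rw [psiChi2smo, if_neg ht1]
        rcases eq_or_lt_of_le ht with h0 | h0
        · rw [← h0]; simp [Real.log_zero]; nlinarith [Real.exp_pos (s / 2)]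
        · have := key_exp s t h0
          nlinarith
end

section
/- Let $\psi^*: \mathbb{R} \to \mathbb{R}$ be differentiable with monotone increasing derivative, let $\lambda > 0$, and suppose $\ell(x;\xi) \in [m, M]$ almost surely. Fix $\epsilon > 0$ and let $\underline{t} = \inf\{t : (\psi^*)'(t) \ge 1 - \epsilon\}$ and $\overline{t} = \sup\{t : (\psi^*)'(t) \le 1 + \epsilon\}$, assumed finite. If $\eta \in \mathbb{R}$ satisfies $1 - \epsilon \le \mathbb{E}_\xi[(\psi^*)'((\ell(x;\xi) - \eta)/\lambda)] \le 1 + \epsilon$, then $\eta \in [m - \lambda\overline{t},\ M - \lambda\underline{t}]$. -/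
open MeasureTheory

/-- Near-stationarity in the dual variable `η` of the DRO dual objective confines
`η` to the compact interval `[m - λ t̄, M - λ t̲]`. -/
theorem dro_dual_variable_bounded {Ξ : Type*} [MeasurableSpace Ξ]
    (μ : Measure Ξ) [IsProbabilityMeasure μ]
    (ψs ψd : ℝ → ℝ) (hψderiv : ∀ t, HasDerivAt ψs (ψd t) t) (hψmono : Monotone ψd)
    (lam : ℝ) (hlam : 0 < lam) (ℓ : Ξ → ℝ) (m M : ℝ)
    (hbound : ∀ᵐ ξ ∂μ, ℓ ξ ∈ Set.Icc m M)
    (ε : ℝ) (hε : 0 < ε)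
    (hne_lo : {t : ℝ | 1 - ε ≤ ψd t}.Nonempty)
    (hbdd_lo : BddBelow {t : ℝ | 1 - ε ≤ ψd t})
    (hne_hi : {t : ℝ | ψd t ≤ 1 + ε}.Nonempty)
    (hbdd_hi : BddAbove {t : ℝ | ψd t ≤ 1 + ε})
    (η : ℝ) (hint : Integrable (fun ξ => ψd ((ℓ ξ - η) / lam)) μ)
    (h_lo : 1 - ε ≤ ∫ ξ, ψd ((ℓ ξ - η) / lam) ∂μ)
    (h_hi : ∫ ξ, ψd ((ℓ ξ - η) / lam) ∂μ ≤ 1 + ε) :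
    η ∈ Set.Icc (m - lam * sSup {t : ℝ | ψd t ≤ 1 + ε})
      (M - lam * sInf {t : ℝ | 1 - ε ≤ ψd t}) := by
  constructor
  · by_contra h
    push_neg at h
    have ht : sSup {t : ℝ | ψd t ≤ 1 + ε} < (m - η) / lam := by
      rw [lt_div_iff₀ hlam]
      linarith [mul_comm lam (sSup {t : ℝ | ψd t ≤ 1 + ε})]
    obtain ⟨t0, ht1, ht2⟩ := exists_between ht
    have ht0 : 1 + ε < ψd t0 := by
      by_contra h'
      push_neg at h'
      exact absurd (le_csSup hbdd_hi h') (not_le.mpr ht1)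
    have hae : (fun _ : Ξ => ψd t0) ≤ᵐ[μ] fun ξ => ψd ((ℓ ξ - η) / lam) := by
      filter_upwards [hbound] with ξ hξ
      exact hψmono (le_trans ht2.le (by
        gcongr <;> linarith [hξ.1]))
    have := integral_mono_ae (integrable_const (ψd t0)) hint hae
    rw [integral_const] at this
    simp [measure_univ] at this
    linarith
  · by_contra h
    push_neg at h
    have ht : (M - η) / lam < sInf {t : ℝ | 1 - ε ≤ ψd t} := by
      rw [div_lt_iff₀ hlam]
      linarith [mul_comm lam (sInf {t : ℝ | 1 - ε ≤ ψd t})]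
    obtain ⟨t0, ht1, ht2⟩ := exists_between ht
    have ht0 : ψd t0 < 1 - ε := by
      by_contra h'
      push_neg at h'
      exact absurd (csInf_le hbdd_lo h') (not_le.mpr ht2)
    have hae : (fun ξ => ψd ((ℓ ξ - η) / lam)) ≤ᵐ[μ] fun _ : Ξ => ψd t0 := by
      filter_upwards [hbound] with ξ hξ
      exact hψmono (le_trans (by
        gcongr <;> linarith [hξ.2]) ht1.le)
    have := integral_mono_ae hint (integrable_const (ψd t0)) hae
    rw [integral_const] at this
    simp [measure_univ] at this
    linarith
end
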